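/- arXiv:1212.1542 — 2 statements merged into one kernel-verified Lean document; each statement's English description precedes it below -/
import Mathlib

section
/- Let κ be a measurable cardinal and let U be a normal ultrafilter on κ such that {α < κ : α is a measurable cardinal} ∈ U. Then {α < κ : α is a compact cardinal} ∈ U if and only if κ is a limit of compact cardinals, i.e. the set of compact cardinals below κ is unbounded in κ. -/
open Set

namespace Separability

/-- `F` is an ultrafilter on the set `D` (members of `F` are subsets of `D`). -/
structure IsUltrafilterOnSet {σ : Type*} (D : Set σ) (F : Set (Set σ)) : Prop where
  sets_subset : ∀ X ∈ F, X ⊆ D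
  univ_mem : D ∈ F
  empty_not_mem : ∅ ∉ F
  superset_mem : ∀ X ∈ F, ∀ Y, Y ⊆ D → X ⊆ Y → Y ∈ F
  inter_mem : ∀ X ∈ F, ∀ Y ∈ F, X ∩ Y ∈ F
  mem_or_compl_mem : ∀ X, X ⊆ D → (X ∈ F ∨ D \ X ∈ F)

/-- An ultrafilter on (the type of ordinals below) `κ`. -/
def IsUltrafilterOn (κ : Ordinal) (F : Set (Set Ordinal)) : Prop :=
  IsUltrafilterOnSet (Set.Iio κ) F

/-- `F` is a *normal* ultrafilter on `κ`: it is an ultrafilter on `κ`, it contains every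
co-bounded subset of `κ`, and every function that is regressive on some member of `F`
is constant on some member of `F`. -/
def IsNormalUltrafilterOn (κ : Ordinal) (F : Set (Set Ordinal)) : Prop :=
  IsUltrafilterOn κ F ∧
  (∀ α < κ, {β | α ≤ β ∧ β < κ} ∈ F) ∧
  (∀ f : Ordinal → Ordinal, ∀ S ∈ F, (∀ β ∈ S, 0 < β → f β < β) →
    ∃ T ∈ F, ∃ γ, ∀ β ∈ T, f β = γ)

/-- The ordinal `κ` is a cardinal. -/
def IsCard (κ : Ordinal) : Prop := κ.card.ord = κ

/-- `F` (an ultrafilter on the set `D`) is `κ`-complete: it is closed under intersections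
of families of fewer than `κ` sets. -/
def IsComplete {σ : Type*} (κ : Ordinal) (D : Set σ) (F : Set (Set σ)) : Prop :=
  ∀ δ < κ, ∀ g : Set.Iio δ → Set σ, (∀ i, g i ∈ F) → (D ∩ ⋂ i, g i) ∈ F

/-- `F` is nonprincipal: it contains no singleton. -/
def IsNonprincipal {σ : Type*} (F : Set (Set σ)) : Prop := ∀ b : σ, {b} ∉ F

/-- `α` is a measurable cardinal: an uncountable cardinal carrying a nonprincipal
`α`-complete ultrafilter on `α`. -/
def IsMeasurable (α : Ordinal) : Prop :=
  IsCard α ∧ Ordinal.omega0 < α ∧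
    ∃ F, IsUltrafilterOn α F ∧ IsNonprincipal F ∧ IsComplete α (Set.Iio α) F

/-- `P_κ(λ)`: the subsets of `λ` of cardinality less than `κ`. -/
def sP (κ lam : Ordinal.{0}) : Set (Set Ordinal.{0}) :=
  {x | x ⊆ Set.Iio lam ∧ Cardinal.mk x < Cardinal.lift.{1} κ.card}

/-- `F`, an ultrafilter on `P_κ(λ)`, is *fine*:
for every `i < λ` the set `{x ∈ P_κ(λ) : i ∈ x}` belongs to `F`. -/
def IsFine (κ lam : Ordinal) (F : Set (Set (Set Ordinal))) : Prop :=
  ∀ i < lam, {x | x ∈ sP κ lam ∧ i ∈ x} ∈ F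

/-- `κ` is a compact (strongly compact) cardinal: an uncountable cardinal such that for every
cardinal `λ ≥ κ` there is a `κ`-complete fine ultrafilter on `P_κ(λ)`. -/
def IsCompact (κ : Ordinal) : Prop :=
  IsCard κ ∧ Ordinal.omega0 < κ ∧
    ∀ lam, IsCard lam → κ ≤ lam →
      ∃ F, IsUltrafilterOnSet (sP κ lam) F ∧ IsComplete κ (sP κ lam) F ∧ IsFine κ lam F

/-- `F`, an ultrafilter on `P_κ(λ)`, is *normal*: every choice function on a member of `F`
(`f x ∈ x` for all `x` in some member of `F`) is constant on some member of `F`. -/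
def IsNormalFineMeasure (F : Set (Set (Set Ordinal))) : Prop :=
  ∀ f : Set Ordinal → Ordinal, ∀ S ∈ F, (∀ x ∈ S, f x ∈ x) →
    ∃ T ∈ F, ∃ γ, ∀ x ∈ T, f x = γ

/-- `κ` is a supercompact cardinal: for every cardinal `λ ≥ κ` there is a `κ`-complete
fine normal ultrafilter on `P_κ(λ)`. -/
def IsSupercompact (κ : Ordinal) : Prop :=
  IsCard κ ∧
    ∀ lam, IsCard lam → κ ≤ lam →
      ∃ F, IsUltrafilterOnSet (sP κ lam) F ∧ IsComplete κ (sP κ lam) F ∧ IsFine κ lam F ∧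
        IsNormalFineMeasure F

/-- The set of measurable cardinals below `κ`. -/
def measSet (κ : Ordinal) : Set Ordinal := {α | α < κ ∧ IsMeasurable α}

/-- `S_X = {α < κ : α is measurable and X ∩ α ∈ U_α}`. -/
def sX (κ : Ordinal) (U : Ordinal → Set (Set Ordinal)) (X : Set Ordinal) : Set Ordinal :=
  {α | α < κ ∧ IsMeasurable α ∧ X ∩ Set.Iio α ∈ U α}

/-- The sum of `⟨U_α : α measurable below κ⟩` over `V`: `Y` belongs to the sum iff
`S_Y ∈ V`. -/
def sumUF (κ : Ordinal) (U : Ordinal → Set (Set Ordinal)) (V : Set (Set Ordinal)) :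
    Set (Set Ordinal) :=
  {Y | Y ⊆ Set.Iio κ ∧ sX κ U Y ∈ V}

/-!
Menas' theorem gives the backward direction: a measurable limit `α` of compact cardinals is
compact, since for `λ ≥ α` the sum, over a nonprincipal `α`-complete ultrafilter on `α`, of fine
ultrafilters on `P_γ(λ)` for compact `γ` cofinal in `α` is an `α`-complete fine ultrafilter on
`P_α(λ)`. By normality (pressing down), the limits of compact cardinals below a limit of compact
cardinals `κ` form a set in `U`; intersected with the measurables it consists of compact
cardinals. Conversely, every member of `U` is unbounded in `κ` because `U` contains the tails.
-/

def IsLimitOf (C : Set Ordinal) (a : Ordinal) : Prop :=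
  ∀ β < a, ∃ γ, β < γ ∧ γ < a ∧ γ ∈ C

lemma IsUltrafilterOnSet.nonempty_of_mem {σ : Type*} {D : Set σ} {F : Set (Set σ)}
    (hF : IsUltrafilterOnSet D F) {S : Set σ} (hS : S ∈ F) : S.Nonempty :=
  nonempty_iff_ne_empty.mpr fun h => hF.empty_not_mem (h ▸ hS)

lemma IsCard.isSuccLimit {κ : Ordinal} (hκ : IsCard κ) (hω : Ordinal.omega0 < κ) :
    Order.IsSuccLimit κ :=
  hκ ▸ Cardinal.isSuccLimit_ord (Ordinal.aleph0_le_card.mpr hω.le)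

lemma sP_mono {β κ lam : Ordinal.{0}} (h : β ≤ κ) : sP β lam ⊆ sP κ lam :=
  fun _ hx => ⟨hx.1, hx.2.trans_le (Cardinal.lift_le.mpr (Ordinal.card_le_card h))⟩

lemma isLimitOf_of_mem {κ : Ordinal} {U : Set (Set Ordinal)} (hU : IsUltrafilterOn κ U)
    (htail : ∀ α < κ, {β | α ≤ β ∧ β < κ} ∈ U) (hκ : Order.IsSuccLimit κ)
    {S : Set Ordinal} (hS : S ∈ U) : IsLimitOf S κ := by
  intro β hβ
  obtain ⟨α, hαS, hβα, hακ⟩ :=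
    hU.nonempty_of_mem (hU.inter_mem _ hS _ (htail _ (hκ.succ_lt hβ)))
  exact ⟨α, (Order.lt_succ β).trans_le hβα, hακ, hαS⟩

lemma setOf_isLimitOf_mem {κ : Ordinal} {U : Set (Set Ordinal)}
    (hU : IsNormalUltrafilterOn κ U) {C : Set Ordinal} (hC : IsLimitOf C κ) :
    {a | a < κ ∧ IsLimitOf C a} ∈ U := by
  set L := {a | a < κ ∧ IsLimitOf C a}
  refine (hU.1.mem_or_compl_mem L fun a ha => ha.1).resolve_right fun hL => ?_
  have hbound : ∀ a ∈ Iio κ \ L, ∃ β, β < a ∧ ∀ γ, β < γ → γ < a → γ ∉ C := by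
    rintro a ⟨ha, haL⟩
    by_contra! h
    exact haL ⟨ha, h⟩
  choose! f hf using hbound
  obtain ⟨T, hT, γ₀, hfT⟩ := hU.2.2 f _ hL fun a ha _ => (hf a ha).1
  have hTL := hU.1.inter_mem _ hT _ hL
  obtain ⟨a₀, ha₀T, ha₀L⟩ := hU.1.nonempty_of_mem hTL
  have hγ₀ : γ₀ < κ := hfT a₀ ha₀T ▸ (hf a₀ ha₀L).1.trans ha₀L.1
  obtain ⟨c, hγ₀c, hcκ, hcC⟩ := hC γ₀ hγ₀
  -- a second element of `C` above `c` puts `c` strictly below the members of a tail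
  obtain ⟨c', hcc', hc'κ, -⟩ := hC c hcκ
  obtain ⟨a₁, ⟨ha₁T, ha₁L⟩, hc'a₁, -⟩ :=
    hU.1.nonempty_of_mem (hU.1.inter_mem _ hTL _ (hU.2.1 c' hc'κ))
  exact (hf a₁ ha₁L).2 c (hfT a₁ ha₁T ▸ hγ₀c) (hcc'.trans_le hc'a₁) hcC

lemma tail_mem_of_isComplete {κ : Ordinal} {F : Set (Set Ordinal)} (hF : IsUltrafilterOn κ F)
    (hnp : IsNonprincipal F) (hc : IsComplete κ (Iio κ) F)
    {γ : Ordinal} (hγ : γ < κ) : {ξ | γ ≤ ξ ∧ ξ < κ} ∈ F := by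
  have hpunct : ∀ i : Iio γ, Iio κ \ {i.1} ∈ F := fun i =>
    (hF.mem_or_compl_mem {i.1} (singleton_subset_iff.mpr (i.2.trans hγ))).resolve_left (hnp i)
  convert hc γ hγ _ hpunct using 1
  ext ξ
  simp only [mem_ofPred_eq, mem_inter_iff, mem_iInter, mem_sdiff, mem_Iio, mem_singleton_iff]
  constructor
  · rintro ⟨hγξ, hξ⟩
    exact ⟨hξ, fun i => ⟨hξ, fun h => (h ▸ i.2).not_ge hγξ⟩⟩
  · rintro ⟨hξ, h⟩
    exact ⟨not_lt.mp fun hξγ => (h ⟨ξ, hξγ⟩).2 rfl, hξ⟩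

section UltrafilterSum

variable {ι σ : Type*} {D : Set σ} {I : Set ι} {W : Set (Set ι)} {E : ι → Set σ}
  {G : ι → Set (Set σ)}

def ultrafilterSum (D : Set σ) (I : Set ι) (W : Set (Set ι)) (E : ι → Set σ)
    (G : ι → Set (Set σ)) : Set (Set σ) :=
  {Y | Y ⊆ D ∧ {i | i ∈ I ∧ Y ∩ E i ∈ G i} ∈ W}

lemma mem_ultrafilterSum_of_forall (hW : IsUltrafilterOnSet I W) {X : Set ι} (hX : X ∈ W)
    {Y : Set σ} (hY : Y ⊆ D) (h : ∀ i ∈ X, Y ∩ E i ∈ G i) :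
    Y ∈ ultrafilterSum D I W E G :=
  ⟨hY, hW.superset_mem X hX _ (fun _ hi => hi.1) fun i hi => ⟨hW.sets_subset X hX hi, h i hi⟩⟩

lemma isUltrafilterOnSet_ultrafilterSum (hW : IsUltrafilterOnSet I W)
    (hE : ∀ i ∈ I, E i ⊆ D) (hG : ∀ i ∈ I, IsUltrafilterOnSet (E i) (G i)) :
    IsUltrafilterOnSet D (ultrafilterSum D I W E G) where
  sets_subset _ hX := hX.1
  univ_mem := mem_ultrafilterSum_of_forall hW hW.univ_mem subset_rfl fun i hi => by
    rw [inter_eq_right.mpr (hE i hi)]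
    exact (hG i hi).univ_mem
  empty_not_mem := by
    rintro ⟨-, h⟩
    have hnone : {i | i ∈ I ∧ ∅ ∩ E i ∈ G i} = ∅ := eq_empty_of_forall_notMem
      fun i ⟨hi, hempty⟩ => (hG i hi).empty_not_mem (by rwa [empty_inter] at hempty)
    exact hW.empty_not_mem (hnone ▸ h)
  superset_mem := by
    rintro X ⟨-, hX⟩ Y hY hXY
    exact mem_ultrafilterSum_of_forall hW hX hY fun i ⟨hi, hXi⟩ =>
      (hG i hi).superset_mem _ hXi _ inter_subset_right (inter_subset_inter_left _ hXY)
  inter_mem := by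
    rintro X ⟨hXD, hX⟩ Y ⟨-, hY⟩
    exact mem_ultrafilterSum_of_forall hW (hW.inter_mem _ hX _ hY) (inter_subset_left.trans hXD)
      fun i ⟨⟨hi, hXi⟩, _, hYi⟩ => (hG i hi).superset_mem _ ((hG i hi).inter_mem _ hXi _ hYi) _
        inter_subset_right fun _ ⟨⟨hx, he⟩, hy, _⟩ => ⟨⟨hx, hy⟩, he⟩
  mem_or_compl_mem := by
    intro X hXD
    by_cases hX : {i | i ∈ I ∧ X ∩ E i ∈ G i} ∈ W
    · exact Or.inl ⟨hXD, hX⟩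
    refine Or.inr (mem_ultrafilterSum_of_forall hW
      ((hW.mem_or_compl_mem _ fun _ hi => hi.1).resolve_left hX) sdiff_subset ?_)
    rintro i ⟨hi, hXi⟩
    have hcompl := ((hG i hi).mem_or_compl_mem _ inter_subset_right).resolve_left
      fun h => hXi ⟨hi, h⟩
    exact (hG i hi).superset_mem _ hcompl _ inter_subset_right
      fun x ⟨he, hn⟩ => ⟨⟨hE i hi he, fun hx => hn ⟨hx, he⟩⟩, he⟩

lemma isComplete_ultrafilterSum {κ : Ordinal} {c : ι → Ordinal} (hW : IsUltrafilterOnSet I W)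
    (hWc : IsComplete κ I W) (hc : ∀ δ < κ, {i | i ∈ I ∧ δ < c i} ∈ W)
    (hE : ∀ i ∈ I, E i ⊆ D) (hG : ∀ i ∈ I, IsUltrafilterOnSet (E i) (G i))
    (hGc : ∀ i ∈ I, IsComplete (c i) (E i) (G i)) :
    IsComplete κ D (ultrafilterSum D I W E G) := by
  intro δ hδ g hg
  have hall := hWc δ hδ _ fun j => (hg j).2
  refine mem_ultrafilterSum_of_forall hW (hW.inter_mem _ hall _ (hc δ hδ)) inter_subset_left ?_
  rintro i ⟨⟨-, hgi⟩, hi, hδi⟩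
  simp only [mem_iInter, mem_ofPred_eq] at hgi
  refine (hG i hi).superset_mem _ (hGc i hi δ hδi (fun j => g j ∩ E i) fun j => (hgi j).2) _
    inter_subset_right fun x ⟨he, hx⟩ => ⟨⟨hE i hi he, ?_⟩, he⟩
  simp only [mem_iInter] at hx ⊢
  exact fun j => (hx j).1

end UltrafilterSum

lemma IsMeasurable.isCompact_of_isLimitOf {α : Ordinal} (hα : IsMeasurable α)
    (hlim : IsLimitOf {γ | IsCompact γ} α) : IsCompact α := by
  obtain ⟨hcard, hω, W, hW, hnp, hWc⟩ := hα
  refine ⟨hcard, hω, fun lam hlam hαlam => ?_⟩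
  choose! e he using hlim
  have hfine : ∀ ξ < α, ∃ G, IsUltrafilterOnSet (sP (e ξ) lam) G ∧
      IsComplete (e ξ) (sP (e ξ) lam) G ∧ IsFine (e ξ) lam G :=
    fun ξ hξ => (he ξ hξ).2.2.2.2 lam hlam ((he ξ hξ).2.1.le.trans hαlam)
  choose! G hGu hGc hGf using hfine
  have hsub : ∀ ξ ∈ Iio α, sP (e ξ) lam ⊆ sP α lam := fun ξ hξ => sP_mono (he ξ hξ).2.1.le
  have htail : ∀ δ < α, {ξ | ξ ∈ Iio α ∧ δ < e ξ} ∈ W := fun δ hδ =>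
    hW.superset_mem _ (tail_mem_of_isComplete hW hnp hWc hδ) _ (fun ξ hξ => hξ.1)
      fun ξ ⟨hδξ, hξ⟩ => ⟨hξ, hδξ.trans_lt (he ξ hξ).1⟩
  refine ⟨ultrafilterSum (sP α lam) (Iio α) W (fun ξ => sP (e ξ) lam) G,
    isUltrafilterOnSet_ultrafilterSum hW hsub hGu,
    isComplete_ultrafilterSum hW hWc htail hsub hGu hGc, fun i hi => ?_⟩
  exact mem_ultrafilterSum_of_forall hW hW.univ_mem (fun x hx => hx.1) fun ξ hξ =>
    (hGu ξ hξ).superset_mem _ (hGf ξ hξ i hi) _ inter_subset_right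
      fun x ⟨hx, hix⟩ => ⟨⟨hsub ξ hξ hx, hix⟩, hx⟩

/-- If `κ` is measurable and `U` is a normal ultrafilter on `κ` containing the measurables
below `κ`, then `U` contains the compact cardinals below `κ` iff `κ` is a limit of compact
cardinals. -/
theorem compacts_mem_iff_limit_of_compacts (κ : Ordinal) (hκ : IsMeasurable κ)
    (U : Set (Set Ordinal)) (hU : IsNormalUltrafilterOn κ U)
    (hmeas : {α | α < κ ∧ IsMeasurable α} ∈ U) :
    {α | α < κ ∧ IsCompact α} ∈ U ↔ (∀ β < κ, ∃ α, β < α ∧ α < κ ∧ IsCompact α) := by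
  constructor
  · intro hcompacts β hβ
    obtain ⟨α, hβα, hακ, -, hα⟩ :=
      isLimitOf_of_mem hU.1 hU.2.1 (hκ.1.isSuccLimit hκ.2.1) hcompacts β hβ
    exact ⟨α, hβα, hακ, hα⟩
  · intro hlim
    have hmeasLim :=
      hU.1.inter_mem _ hmeas _ (setOf_isLimitOf_mem hU (C := {γ | IsCompact γ}) hlim)
    refine hU.1.superset_mem _ hmeasLim _ (fun a ha => ha.1) ?_
    rintro a ⟨⟨haκ, ha⟩, -, haLim⟩
    exact ⟨haκ, ha.isCompact_of_isLimitOf haLim⟩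

end Separability
end

section
/- Let κ be a measurable cardinal, and for every measurable cardinal α < κ let U_α be a normal ultrafilter on α such that {β < α : β is measurable} ∉ U_α. For X ⊆ κ write S_X = {α < κ : α is measurable and X ∩ α ∈ U_α}. Let A_p, A_q ⊆ κ be such that every member of A_p is a measurable cardinal, and assume: (i) there is a normal ultrafilter V₁ on κ with A_p ∈ V₁ and A_q ∈ V₁; (ii) there is a normal ultrafilter V₀ on κ with A_p ∈ V₀ and A_q ∉ V₀; (iii) there is X ⊆ κ with S_X = A_p \ A_q. Then there exist two distinct normal ultrafilters W₀ ≠ W₁ on κ such that {α < κ : α is measurable} ∉ W₀ and {α < κ : α is measurable} ∉ W₁. -/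
open Set

namespace Separability

/- Summing the measures `U_α` along a normal measure `V` on `κ` that concentrates on
measurables gives a normal measure `sumUF κ U V` on `κ`, and it avoids the measurables
because every `U_α` does. Both `V₀` and `V₁` contain `A_p`, hence concentrate on measurables,
and the set `X` separates the two sums, since `S_X = A_p \ A_q` lies in `V₀` but not in `V₁`. -/

namespace IsUltrafilterOnSet

variable {σ : Type*} {D : Set σ} {F : Set (Set σ)} {X Y Z : Set σ}

lemma mem_of_inter_subset (hF : IsUltrafilterOnSet D F) (hX : X ∈ F) (hY : Y ∈ F)
    (hZ : Z ⊆ D) (h : X ∩ Y ⊆ Z) : Z ∈ F :=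
  hF.superset_mem _ (hF.inter_mem _ hX _ hY) _ hZ h

lemma inter_nonempty (hF : IsUltrafilterOnSet D F) (hX : X ∈ F) (hY : Y ∈ F) :
    (X ∩ Y).Nonempty :=
  nonempty_iff_ne_empty.2 fun h => hF.empty_not_mem (h ▸ hF.inter_mem _ hX _ hY)

lemma diff_mem_of_notMem (hF : IsUltrafilterOnSet D F) (hXD : X ⊆ D) (hX : X ∉ F) :
    D \ X ∈ F :=
  (hF.mem_or_compl_mem X hXD).resolve_left hX

end IsUltrafilterOnSet

lemma IsMeasurable.one_lt {α : Ordinal} (hα : IsMeasurable α) : 1 < α :=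
  Ordinal.one_lt_omega0.trans hα.2.1

lemma IsMeasurable.isSuccLimit {α : Ordinal} (hα : IsMeasurable α) : Order.IsSuccLimit α := by
  have := Cardinal.isSuccLimit_ord (Ordinal.aleph0_le_card.2 hα.2.1.le)
  rwa [hα.1] at this

lemma IsNormalUltrafilterOn.exists_lt_forall_eq {α : Ordinal} {F : Set (Set Ordinal)}
    (hF : IsNormalUltrafilterOn α F) (hα : 1 < α) {f : Ordinal → Ordinal} {S : Set Ordinal}
    (hS : S ∈ F) (hf : ∀ β ∈ S, 0 < β → f β < β) :
    ∃ γ < α, ∃ T ∈ F, ∀ β ∈ T, f β = γ := by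
  have hS' : S ∩ {β | 1 ≤ β ∧ β < α} ∈ F := hF.1.inter_mem _ hS _ (hF.2.1 1 hα)
  obtain ⟨T, hT, γ, hfγ⟩ := hF.2.2 f _ hS' fun β hβ => hf β hβ.1
  -- `0` is excluded from `S'`, so the constant value is `f β < β < α` for any `β ∈ T ∩ S'`
  obtain ⟨β, hβT, hβS, hβ1, hβα⟩ := hF.1.inter_nonempty hT hS'
  refine ⟨γ, ?_, T, hT, hfγ⟩
  calc γ = f β := (hfγ β hβT).symm
    _ < β := hf β hβS (zero_lt_one.trans_le hβ1)
    _ < α := hβα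

section SumUltrafilter

variable {κ : Ordinal} {U : Ordinal → Set (Set Ordinal)} {V : Set (Set Ordinal)}
  {Y Z : Set Ordinal}

lemma sX_subset_Iio : sX κ U Y ⊆ Iio κ := fun _ h => h.1

lemma measSet_subset_Iio : measSet κ ⊆ Iio κ := fun _ h => h.1

section Ultrafilter

variable (hU : ∀ α ∈ measSet κ, IsUltrafilterOn α (U α))
include hU

lemma sX_mono (h : Y ⊆ Z) : sX κ U Y ⊆ sX κ U Z := fun α ⟨hακ, hαm, hY⟩ =>
  ⟨hακ, hαm, (hU α ⟨hακ, hαm⟩).superset_mem _ hY _ inter_subset_right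
    (inter_subset_inter_left _ h)⟩

lemma sX_inter_subset : sX κ U Y ∩ sX κ U Z ⊆ sX κ U (Y ∩ Z) :=
  fun α ⟨⟨hακ, hαm, hY⟩, _, _, hZ⟩ =>
    ⟨hακ, hαm, (hU α ⟨hακ, hαm⟩).mem_of_inter_subset hY hZ inter_subset_right
      fun _ ⟨⟨hβY, hβα⟩, hβZ, _⟩ => ⟨⟨hβY, hβZ⟩, hβα⟩⟩

lemma sX_empty : sX κ U ∅ = ∅ :=
  eq_empty_of_forall_notMem fun α ⟨hακ, hαm, h⟩ =>
    (hU α ⟨hακ, hαm⟩).empty_not_mem (by rwa [empty_inter] at h)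

lemma measSet_subset_sX_Iio : measSet κ ⊆ sX κ U (Iio κ) := fun α hα =>
  ⟨hα.1, hα.2, by
    rw [inter_eq_self_of_subset_right (Iio_subset_Iio hα.1.le)]
    exact (hU α hα).univ_mem⟩

lemma measSet_diff_sX_subset : measSet κ \ sX κ U Y ⊆ sX κ U (Iio κ \ Y) :=
  fun α ⟨hα, hαY⟩ => by
    refine ⟨hα.1, hα.2, ?_⟩
    have hcompl := (hU α hα).diff_mem_of_notMem inter_subset_right fun h => hαY ⟨hα.1, hα.2, h⟩
    refine (hU α hα).superset_mem _ hcompl _ inter_subset_right ?_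
    exact fun β ⟨hβα, hβY⟩ => ⟨⟨hβα.trans hα.1, fun h => hβY ⟨h, hβα⟩⟩, hβα⟩

lemma isUltrafilterOn_sumUF (hV : IsUltrafilterOn κ V) (hm : measSet κ ∈ V) :
    IsUltrafilterOn κ (sumUF κ U V) where
  sets_subset _ hY := hY.1
  univ_mem := ⟨subset_rfl, hV.superset_mem _ hm _ sX_subset_Iio (measSet_subset_sX_Iio hU)⟩
  empty_not_mem h := hV.empty_not_mem (sX_empty hU ▸ h.2)
  superset_mem _ hY _ hZ hYZ := ⟨hZ, hV.superset_mem _ hY.2 _ sX_subset_Iio (sX_mono hU hYZ)⟩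
  inter_mem _ hY _ hZ :=
    ⟨inter_subset_left.trans hY.1,
      hV.mem_of_inter_subset hY.2 hZ.2 sX_subset_Iio (sX_inter_subset hU)⟩
  mem_or_compl_mem Y hY := by
    rcases hV.mem_or_compl_mem _ (sX_subset_Iio (Y := Y)) with h | h
    · exact Or.inl ⟨hY, h⟩
    · refine Or.inr ⟨sdiff_subset, hV.mem_of_inter_subset hm h sX_subset_Iio ?_⟩
      exact fun α ⟨hαm, _, hαY⟩ => measSet_diff_sX_subset hU ⟨hαm, hαY⟩

end Ultrafilter

section Normal

variable (hU : ∀ α ∈ measSet κ, IsNormalUltrafilterOn α (U α))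
include hU

lemma measSet_inter_Ioi_subset_sX (α₀ : Ordinal) :
    measSet κ ∩ Ioi α₀ ⊆ sX κ U {β | α₀ ≤ β ∧ β < κ} := fun α ⟨hα, hα₀α⟩ =>
  ⟨hα.1, hα.2, (hU α hα).1.superset_mem _ ((hU α hα).2.1 α₀ hα₀α) _ inter_subset_right
    fun _ ⟨hα₀β, hβα⟩ => ⟨⟨hα₀β, hβα.trans hα.1⟩, hβα⟩⟩

/-- The sum `sumUF κ U V` inherits normality: the values `g α` on which `f` is eventually constant
modulo `U α` form a regressive function, which `V` makes constant. -/
lemma isNormalUltrafilterOn_sumUF (hκ : Order.IsSuccLimit κ) (hV : IsNormalUltrafilterOn κ V)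
    (hm : measSet κ ∈ V) : IsNormalUltrafilterOn κ (sumUF κ U V) := by
  refine ⟨isUltrafilterOn_sumUF (fun α hα => (hU α hα).1) hV.1 hm, fun α₀ hα₀ => ?_, ?_⟩
  · have hIci : {β | α₀ + 1 ≤ β ∧ β < κ} ∈ V := hV.2.1 _ (hκ.succ_lt hα₀)
    refine ⟨fun _ hβ => hβ.2, hV.1.mem_of_inter_subset hm hIci sX_subset_Iio ?_⟩
    exact fun α ⟨hα, hα₀α, _⟩ =>
      measSet_inter_Ioi_subset_sX hU α₀ ⟨hα, (Order.lt_succ α₀).trans_le hα₀α⟩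
  · rintro f S ⟨hSκ, hS⟩ hf
    have hlocal : ∀ α ∈ sX κ U S, ∃ γ < α, ∃ T ∈ U α, ∀ β ∈ T, f β = γ :=
      fun α ⟨hακ, hαm, hSα⟩ => (hU α ⟨hακ, hαm⟩).exists_lt_forall_eq hαm.one_lt hSα
        fun β hβ => hf β hβ.1
    choose! g hg T hT hfT using hlocal
    obtain ⟨T', hT', γ, hgγ⟩ := hV.2.2 g _ hS fun α hα _ => hg α hα
    refine ⟨{β | β ∈ S ∧ f β = γ}, ⟨fun β hβ => hSκ hβ.1, ?_⟩, γ, fun β hβ => hβ.2⟩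
    refine hV.1.mem_of_inter_subset hT' hS sX_subset_Iio ?_
    rintro α ⟨hαT', hαS⟩
    obtain ⟨hακ, hαm, hSα⟩ := hαS
    refine ⟨hακ, hαm, (hU α ⟨hακ, hαm⟩).1.mem_of_inter_subset (hT α ⟨hακ, hαm, hSα⟩) hSα
      inter_subset_right ?_⟩
    rintro β ⟨hβT, hβS, hβα⟩
    exact ⟨⟨hβS, (hfT α ⟨hακ, hαm, hSα⟩ β hβT).trans (hgγ α hαT')⟩, hβα⟩

end Normal

lemma measSet_inter_Iio {α : Ordinal} (h : α ≤ κ) : measSet κ ∩ Iio α = measSet α := by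
  ext β
  exact ⟨fun ⟨⟨_, hβm⟩, hβα⟩ => ⟨hβα, hβm⟩, fun ⟨hβα, hβm⟩ => ⟨⟨hβα.trans_le h, hβm⟩, hβα⟩⟩

lemma measSet_notMem_sumUF (hU : ∀ α ∈ measSet κ, measSet α ∉ U α)
    (hV : IsUltrafilterOn κ V) : measSet κ ∉ sumUF κ U V := by
  rintro ⟨-, h⟩
  have hempty : sX κ U (measSet κ) = ∅ := eq_empty_of_forall_notMem fun α ⟨hακ, hαm, hα⟩ =>
    hU α ⟨hακ, hαm⟩ (by rwa [measSet_inter_Iio hακ.le] at hα)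
  exact hV.empty_not_mem (hempty ▸ h)

end SumUltrafilter

theorem two_normal_ultrafilters_avoiding_measurables_general (κ : Ordinal) (hκ : IsMeasurable κ)
    (U : Ordinal → Set (Set Ordinal))
    (hU : ∀ α, α < κ → IsMeasurable α →
      IsNormalUltrafilterOn α (U α) ∧ {β | β < α ∧ IsMeasurable β} ∉ U α)
    (Ap Aq : Set Ordinal)
    (hApm : ∀ α ∈ Ap, IsMeasurable α)
    (V₁ : Set (Set Ordinal)) (hV₁ : IsNormalUltrafilterOn κ V₁)
    (h1p : Ap ∈ V₁) (h1q : Aq ∈ V₁)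
    (V₀ : Set (Set Ordinal)) (hV₀ : IsNormalUltrafilterOn κ V₀)
    (h0p : Ap ∈ V₀) (h0q : Aq ∉ V₀)
    (X : Set Ordinal) (hXsub : X ⊆ Set.Iio κ) (hSX : sX κ U X = Ap \ Aq) :
    ∃ W₀ W₁, IsNormalUltrafilterOn κ W₀ ∧ IsNormalUltrafilterOn κ W₁ ∧ W₀ ≠ W₁ ∧
      measSet κ ∉ W₀ ∧ measSet κ ∉ W₁ := by
  have hUn : ∀ α ∈ measSet κ, IsNormalUltrafilterOn α (U α) := fun α hα => (hU α hα.1 hα.2).1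
  have hUm : ∀ α ∈ measSet κ, measSet α ∉ U α := fun α hα => (hU α hα.1 hα.2).2
  have hmeas : ∀ V, IsUltrafilterOn κ V → Ap ∈ V → measSet κ ∈ V := fun V hV hAp =>
    hV.superset_mem _ hAp _ measSet_subset_Iio fun α hα => ⟨hV.sets_subset _ hAp hα, hApm α hα⟩
  have hS₀ : sX κ U X ∈ V₀ := hSX ▸ hV₀.1.mem_of_inter_subset h0p
    (hV₀.1.diff_mem_of_notMem (hV₁.1.sets_subset _ h1q) h0q)
    (sdiff_subset.trans (hV₀.1.sets_subset _ h0p)) fun _ ⟨hp, _, hq⟩ => ⟨hp, hq⟩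
  have hS₁ : sX κ U X ∉ V₁ := fun h => by
    obtain ⟨_, ⟨-, hq⟩, hq'⟩ := hV₁.1.inter_nonempty (hSX ▸ h) h1q
    exact hq hq'
  refine ⟨sumUF κ U V₀, sumUF κ U V₁,
    isNormalUltrafilterOn_sumUF hUn hκ.isSuccLimit hV₀ (hmeas V₀ hV₀.1 h0p),
    isNormalUltrafilterOn_sumUF hUn hκ.isSuccLimit hV₁ (hmeas V₁ hV₁.1 h1p), fun h => ?_,
    measSet_notMem_sumUF hUm hV₀.1, measSet_notMem_sumUF hUm hV₁.1⟩
  have hX : X ∈ sumUF κ U V₀ := ⟨hXsub, hS₀⟩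
  rw [h] at hX
  exact hS₁ hX.2

/-- If the properties `p, q` (given by `A_p, A_q`) are separable on `κ` and some `X ⊆ κ`
satisfies `S_X = A_p \ A_q`, then there are two distinct normal ultrafilters on `κ`
which do not contain the measurables. -/
theorem two_normal_ultrafilters_avoiding_measurables (κ : Ordinal) (hκ : IsMeasurable κ)
    (U : Ordinal → Set (Set Ordinal))
    (hU : ∀ α, α < κ → IsMeasurable α →
      IsNormalUltrafilterOn α (U α) ∧ {β | β < α ∧ IsMeasurable β} ∉ U α)
    (Ap Aq : Set Ordinal) (hApsub : Ap ⊆ Set.Iio κ) (hAqsub : Aq ⊆ Set.Iio κ)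
    (hApm : ∀ α ∈ Ap, IsMeasurable α)
    (V₁ : Set (Set Ordinal)) (hV₁ : IsNormalUltrafilterOn κ V₁)
    (h1p : Ap ∈ V₁) (h1q : Aq ∈ V₁)
    (V₀ : Set (Set Ordinal)) (hV₀ : IsNormalUltrafilterOn κ V₀)
    (h0p : Ap ∈ V₀) (h0q : Aq ∉ V₀)
    (X : Set Ordinal) (hXsub : X ⊆ Set.Iio κ) (hSX : sX κ U X = Ap \ Aq) :
    ∃ W₀ W₁, IsNormalUltrafilterOn κ W₀ ∧ IsNormalUltrafilterOn κ W₁ ∧ W₀ ≠ W₁ ∧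
      measSet κ ∉ W₀ ∧ measSet κ ∉ W₁ :=
  two_normal_ultrafilters_avoiding_measurables_general κ hκ U hU Ap Aq hApm V₁ hV₁ h1p h1q V₀ hV₀
    h0p h0q X hXsub hSX

end Separability
end
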